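/- arXiv:1402.0747 — 4 statements merged into one kernel-verified Lean document; each statement's English description precedes it below -/
import Mathlib

section
/- For every positive integer k, the sum over all positive integers n with n ≠ k of 1/(n² − k²) equals 3/(4k²). -/
open Finset Filter Topology

/-!
Partial fractions give `2k / (n² - k²) = h n - h (n + 2k)` with `h n = (n - k)⁻¹`, so the
series telescopes. Summed over all `n : ℕ` (reading `h k` as `0⁻¹ = 0`), it equals
`∑ i < 2k, h i = -k⁻¹`, since the terms for `i ≥ 1` cancel in pairs `±j`. Removing the terms
`n = 0` (value `-2/k`) and `n = k` (value `-1/(2k)`) leaves `3/(2k)`, and dividing by `2k`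
gives the claim.
-/

theorem Finset.sum_range_sub_add_shift {G : Type*} [AddCommGroup G] (f : ℕ → G) (d n : ℕ) :
    ∑ i ∈ range n, (f i - f (i + d)) = ∑ i ∈ range d, f i - ∑ i ∈ range d, f (n + i) := by
  have hleft := sum_range_add f n d
  have hright := sum_range_add f d n
  rw [add_comm d n] at hright
  simp_rw [sum_sub_distrib, add_comm _ d]
  rw [eq_sub_iff_add_eq, sub_add_eq_add_sub, sub_eq_iff_eq_add, ← hleft, hright, add_comm]

theorem hasSum_sub_add_shift_of_tendsto_zero {G : Type*} [TopologicalSpace G] [AddCommGroup G]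
    [IsTopologicalAddGroup G] [T2Space G] {f : ℕ → G} {d : ℕ}
    (hs : Summable fun i => f i - f (i + d)) (hf : Tendsto f atTop (𝓝 0)) :
    HasSum (fun i => f i - f (i + d)) (∑ i ∈ range d, f i) := by
  rw [hs.hasSum_iff_tendsto_nat]
  simp_rw [sum_range_sub_add_shift]
  have htail : Tendsto (fun n => ∑ i ∈ range d, f (n + i)) atTop (𝓝 0) := by
    simpa using tendsto_finsetSum (range d) fun i _ => hf.comp (tendsto_add_atTop_nat i)
  simpa using tendsto_const_nhds.sub htail

theorem Function.Odd.sum_range_sub_eq_zero {R β : Type*} [Ring R] [AddCommGroup β]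
    [IsAddTorsionFree β] {g : R → β} (hg : g.Odd) (m : ℕ) :
    ∑ i ∈ range (2 * m + 1), g (i - m) = 0 := by
  rw [← neg_eq_self, ← sum_neg_distrib, ← sum_range_reflect]
  refine sum_congr rfl fun i hi => ?_
  rw [mem_range] at hi
  rw [← hg, Nat.cast_sub (by omega)]
  push_cast
  exact congrArg g (by rw [two_mul]; abel)

theorem sum_range_two_mul_inv_natCast_sub {k : ℕ} (hk : 0 < k) :
    ∑ i ∈ range (2 * k), ((i : ℝ) - k)⁻¹ = -(k : ℝ)⁻¹ := by
  obtain ⟨m, rfl⟩ : ∃ m, k = m + 1 := ⟨k - 1, by omega⟩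
  have hodd : (Inv.inv : ℝ → ℝ).Odd := fun x => inv_neg
  rw [show 2 * (m + 1) = 2 * m + 1 + 1 by ring, sum_range_succ']
  push_cast
  simp only [add_sub_add_right_eq_sub, hodd.sum_range_sub_eq_zero, zero_sub, inv_neg, zero_add]

theorem summable_inv_natCast_sq_sub (c : ℝ) : Summable fun n : ℕ => ((n : ℝ) ^ 2 - c)⁻¹ := by
  refine summable_of_isBigO_nat (Real.summable_nat_pow_inv.2 one_lt_two) <|
    Asymptotics.IsBigO.of_bound 2 ?_
  have hlarge := ((tendsto_pow_atTop two_ne_zero).comp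
    tendsto_natCast_atTop_atTop).eventually_ge_atTop (2 * |c| + 1)
  filter_upwards [hlarge] with n hn
  simp only [Function.comp_apply] at hn
  have hc := le_abs_self c
  have hpos : 0 < (n : ℝ) ^ 2 - c := by linarith [abs_nonneg c]
  rw [Real.norm_of_nonneg (inv_nonneg.2 hpos.le), Real.norm_of_nonneg (by positivity),
    ← div_eq_mul_inv, ← inv_div]
  exact inv_anti₀ (by linarith [abs_nonneg c]) (by linarith)

theorem two_mul_div_natCast_sq_sub_sq {n k : ℕ} (h : n ≠ k) :
    2 * (k : ℝ) / ((n : ℝ) ^ 2 - k ^ 2) = ((n : ℝ) - k)⁻¹ - (((n + 2 * k : ℕ) : ℝ) - k)⁻¹ := by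
  have hsub : (n : ℝ) - k ≠ 0 := sub_ne_zero.2 (by exact_mod_cast h)
  have hadd : (n : ℝ) + k ≠ 0 := by norm_cast; omega
  rw [show ((n + 2 * k : ℕ) : ℝ) - k = n + k by push_cast; ring, inv_sub_inv hsub hadd]
  ring

theorem hasSum_inv_natCast_sub_sub_shift {k : ℕ} (hk : 0 < k) :
    HasSum (fun n : ℕ => ((n : ℝ) - k)⁻¹ - (((n + 2 * k : ℕ) : ℝ) - k)⁻¹) (-(k : ℝ)⁻¹) := by
  rw [← sum_range_two_mul_inv_natCast_sub hk]
  refine hasSum_sub_add_shift_of_tendsto_zero ?_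
    (tendsto_inv_atTop_zero.comp (tendsto_atTop_add_const_right _ _ tendsto_natCast_atTop_atTop))
  rw [← ({k} : Finset ℕ).summable_compl_iff]
  have hsq : Summable fun n : {n // n ∉ ({k} : Finset ℕ)} => ((n : ℝ) ^ 2 - k ^ 2)⁻¹ :=
    (summable_inv_natCast_sq_sub _).comp_injective Subtype.val_injective
  refine (hsq.mul_left (2 * k : ℝ)).congr fun n => ?_
  rw [← div_eq_mul_inv, two_mul_div_natCast_sq_sub_sq (by simpa using n.2)]

theorem quadratic_integer_sum (k : ℕ) (hk : 0 < k) :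
    ∑' n : {n : ℕ // 0 < n ∧ n ≠ k}, (1 : ℝ) / ((n : ℝ) ^ 2 - (k : ℝ) ^ 2)
      = 3 / (4 * (k : ℝ) ^ 2) := by
  let s : Finset ℕ := {0, k}
  have hs : ∀ n, n ∉ s ↔ 0 < n ∧ n ≠ k := by simp [s, Nat.pos_iff_ne_zero]
  have htele := (s.hasSum_iff_compl).mp (hasSum_inv_natCast_sub_sub_shift hk)
  have hvalue : (-(k : ℝ)⁻¹ - ∑ i ∈ s, (((i : ℝ) - k)⁻¹ - (((i + 2 * k : ℕ) : ℝ) - k)⁻¹))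
      / (2 * k) = 3 / (4 * k ^ 2) := by
    have hk0 : (k : ℝ) ≠ 0 := by positivity
    rw [sum_pair hk.ne]
    push_cast
    -- the term `i = k` is `0⁻¹ - (2 * k)⁻¹`, and `0⁻¹ = 0`
    rw [sub_self, inv_zero, show (0 : ℝ) + 2 * k - k = k by ring,
      show (k : ℝ) + 2 * k - k = 2 * k by ring]
    field_simp
    ring
  have hcompl :
      HasSum (fun n : {n // n ∉ s} => 1 / ((n : ℝ) ^ 2 - k ^ 2)) (3 / (4 * (k : ℝ) ^ 2)) := by
    rw [← hvalue]
    refine (htele.div_const (2 * k : ℝ)).congr_fun fun n => ?_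
    rw [← two_mul_div_natCast_sq_sub_sq ((hs n).1 n.2).2, div_right_comm, div_self (by positivity)]
  exact ((Equiv.subtypeEquivRight hs).hasSum_iff
    (f := fun n : {n // 0 < n ∧ n ≠ k} => 1 / ((n : ℝ) ^ 2 - k ^ 2))).mp hcompl |>.tsum_eq
end

section
/- Let n ≥ 1 be an integer, set ν = n + 1/2, and let H_n(z) = ∑_{k=0}^n Γ(2n − k + 1) · z^k / (Γ(n − k + 1) · Γ(k + 1) · 2^{n−k}) be the monic complex polynomial of degree n. Let z_1, …, z_n be the roots of H_n, assumed pairwise distinct and all nonzero. Then for every j ∈ {1, …, n}: ∑_{k=1, k≠j}^n 1/(z_k − z_j) = (1 − 2 z_j − 2ν)/(2 z_j). -/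
open Finset

open Polynomial

/-- The monic polynomial `H_n` associated with the modified Bessel function of the
second kind `K_{n+1/2}`. -/
noncomputable def macdonaldPoly (n : ℕ) (w : ℂ) : ℂ :=
  ∑ k ∈ Finset.range (n + 1),
    Complex.Gamma (2 * (n : ℂ) - (k : ℂ) + 1) * w ^ k /
      (Complex.Gamma ((n : ℂ) - (k : ℂ) + 1) * Complex.Gamma ((k : ℂ) + 1) *
        (2 : ℂ) ^ (n - k))

noncomputable def besselCoeff (n k : ℕ) : ℂ :=
  ((2 * n - k).factorial : ℂ) / (((n - k).factorial : ℂ) * (k.factorial : ℂ) * 2 ^ (n - k))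

lemma besselCoeff_rec (n m : ℕ) (h : m < n) :
    ((m : ℂ) + 1) * ((m : ℂ) - 2 * n) * besselCoeff n (m + 1)
      + 2 * ((n : ℂ) - m) * besselCoeff n m = 0 := by
  obtain ⟨d, rfl⟩ : ∃ d, n = m + d + 1 := ⟨n - m - 1, by omega⟩
  have e1 : 2 * (m + d + 1) - (m + 1) = m + 2 * d + 1 := by omega
  have e2 : 2 * (m + d + 1) - m = (m + 2 * d + 1) + 1 := by omega
  have e3 : (m + d + 1) - (m + 1) = d := by omega
  have e4 : (m + d + 1) - m = d + 1 := by omega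
  simp only [besselCoeff, e1, e2, e3, e4, Nat.factorial_succ, pow_succ]
  have h1 : ((m + 2 * d + 1).factorial : ℂ) ≠ 0 := Nat.cast_ne_zero.2 (Nat.factorial_ne_zero _)
  have h2 : ((d).factorial : ℂ) ≠ 0 := Nat.cast_ne_zero.2 (Nat.factorial_ne_zero _)
  have h3 : ((m).factorial : ℂ) ≠ 0 := Nat.cast_ne_zero.2 (Nat.factorial_ne_zero _)
  have h5 : (2 : ℂ) ^ d ≠ 0 := pow_ne_zero _ two_ne_zero
  have h6 : ((m : ℂ) + 1) ≠ 0 := Nat.cast_add_one_ne_zero m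
  have h7 : ((d : ℂ) + 1) ≠ 0 := Nat.cast_add_one_ne_zero d
  have h8 : (2 : ℂ) ≠ 0 := two_ne_zero
  push_cast
  field_simp
  ring

noncomputable def besselP (n : ℕ) : Polynomial ℂ :=
  ∑ k ∈ Finset.range (n + 1), Polynomial.monomial k (besselCoeff n k)

lemma besselP_eval (n : ℕ) (w : ℂ) : (besselP n).eval w = macdonaldPoly n w := by
  rw [besselP, macdonaldPoly, eval_finset_sum]
  refine Finset.sum_congr rfl fun k hk => ?_
  have hk' : k ≤ n := Nat.lt_succ_iff.mp (Finset.mem_range.mp hk)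
  rw [eval_monomial, besselCoeff]
  have c1 : 2 * (n : ℂ) - (k : ℂ) + 1 = ((2 * n - k : ℕ) : ℂ) + 1 := by
    push_cast [Nat.cast_sub (by omega : k ≤ 2 * n)]; ring
  have c2 : (n : ℂ) - (k : ℂ) + 1 = ((n - k : ℕ) : ℂ) + 1 := by
    push_cast [Nat.cast_sub hk']; ring
  rw [c1, c2, Complex.Gamma_nat_eq_factorial, Complex.Gamma_nat_eq_factorial,
    Complex.Gamma_nat_eq_factorial]
  ring

lemma besselP_ode (n : ℕ) (w : ℂ) :
    w * (derivative (derivative (besselP n))).eval w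
      - 2 * (w + n) * (derivative (besselP n)).eval w
      + 2 * n * (besselP n).eval w = 0 := by
  have hd : derivative (besselP n)
      = ∑ k ∈ Finset.range (n + 1), monomial (k - 1) (besselCoeff n k * k) := by
    rw [besselP, map_sum]; simp [derivative_monomial]
  have hdd : derivative (derivative (besselP n))
      = ∑ k ∈ Finset.range (n + 1),
          monomial (k - 1 - 1) (besselCoeff n k * (k : ℂ) * ((k - 1 : ℕ) : ℂ)) := by
    rw [hd, map_sum]; simp [derivative_monomial]
  rw [hdd, hd, besselP, eval_finset_sum, eval_finset_sum, eval_finset_sum]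
  simp only [eval_monomial]
  rw [Finset.mul_sum, Finset.mul_sum, Finset.mul_sum]
  rw [← Finset.sum_sub_distrib, ← Finset.sum_add_distrib]
  have key : ∀ k ∈ Finset.range (n + 1),
      w * (besselCoeff n k * (k : ℂ) * ((k - 1 : ℕ) : ℂ) * w ^ (k - 1 - 1))
        - 2 * (w + n) * (besselCoeff n k * (k : ℂ) * w ^ (k - 1))
        + 2 * n * (besselCoeff n k * w ^ k)
      = besselCoeff n k * (k : ℂ) * (((k : ℂ) - 1) - 2 * n) * w ^ (k - 1)
        + 2 * ((n : ℂ) - k) * besselCoeff n k * w ^ k := by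
    intro k _
    match k with
    | 0 => simp
    | 1 => simp; ring
    | (m + 2) =>
      have e : (m + 2 : ℕ) - 1 = m + 1 := rfl
      have e2 : (m + 2 : ℕ) - 1 - 1 = m := rfl
      rw [e2, e]
      push_cast
      rw [show w ^ (m + 1) = w ^ m * w from pow_succ w m,
        show w ^ (m + 2) = w ^ m * w * w from by ring]
      ring
  rw [Finset.sum_congr rfl key, Finset.sum_add_distrib]
  have hA : ∑ k ∈ Finset.range (n + 1),
      besselCoeff n k * (k : ℂ) * (((k : ℂ) - 1) - 2 * n) * w ^ (k - 1)
      = ∑ m ∈ Finset.range n,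
        ((m : ℂ) + 1) * ((m : ℂ) - 2 * n) * besselCoeff n (m + 1) * w ^ m := by
    rw [Finset.sum_range_succ']
    simp only [Nat.cast_zero, mul_zero, zero_mul, add_zero]
    refine Finset.sum_congr rfl fun m _ => ?_
    have e : (m + 1 : ℕ) - 1 = m := rfl
    rw [e]
    push_cast
    ring
  have hB : ∑ k ∈ Finset.range (n + 1), 2 * ((n : ℂ) - k) * besselCoeff n k * w ^ k
      = ∑ m ∈ Finset.range n, 2 * ((n : ℂ) - m) * besselCoeff n m * w ^ m := by
    rw [Finset.sum_range_succ]
    simp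
  rw [hA, hB, ← Finset.sum_add_distrib]
  refine Finset.sum_eq_zero fun m hm => ?_
  have hrec := besselCoeff_rec n m (Finset.mem_range.mp hm)
  have : ((m : ℂ) + 1) * ((m : ℂ) - 2 * n) * besselCoeff n (m + 1) * w ^ m
      + 2 * ((n : ℂ) - m) * besselCoeff n m * w ^ m
      = (((m : ℂ) + 1) * ((m : ℂ) - 2 * n) * besselCoeff n (m + 1)
        + 2 * ((n : ℂ) - m) * besselCoeff n m) * w ^ m := by ring
  rw [this, hrec, zero_mul]

lemma derivative_finset_prod' {ι : Type*} [DecidableEq ι] (s : Finset ι) (f : ι → Polynomial ℂ) :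
    derivative (∏ i ∈ s, f i) = ∑ i ∈ s, (∏ j ∈ s.erase i, f j) * derivative (f i) := by
  classical
  induction s using Finset.cons_induction with
  | empty => simp
  | cons a s ha ih =>
    rw [Finset.prod_cons, derivative_mul, ih, Finset.sum_cons,
      Finset.erase_cons, Finset.mul_sum]
    congr 1
    · exact mul_comm _ _
    · refine Finset.sum_congr rfl fun i hi => ?_
      rw [Finset.erase_cons_of_ne ha (fun h => ha (h ▸ hi)), Finset.prod_cons]
      ring

theorem macdonald_zeros_sum_identity (n : ℕ) (hn : 1 ≤ n) (ν : ℂ) (hν : ν = (n : ℂ) + 1 / 2)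
    (z : Fin n → ℂ) (hinj : Function.Injective z) (hz0 : ∀ k, z k ≠ 0)
    (hroots : ∀ w : ℂ, macdonaldPoly n w = ∏ j, (w - z j)) (j : Fin n) :
    ∑ k ∈ Finset.univ.erase j, 1 / (z k - z j)
      = (1 - 2 * z j - 2 * ν) / (2 * z j) := by
  classical
  set P : Polynomial ℂ := besselP n with hPdef
  have hPQ : P = ∏ i, (X - C (z i)) := by
    apply Polynomial.funext
    intro w
    rw [besselP_eval n w, hroots w]
    simp [eval_prod]
  set Q : Polynomial ℂ := ∏ i ∈ Finset.univ.erase j, (X - C (z i)) with hQdef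
  have hfact : P = (X - C (z j)) * Q := by
    rw [hPQ, hQdef]
    exact (Finset.mul_prod_erase _ _ (Finset.mem_univ j)).symm
  -- evaluations of Q and its derivative at z j
  have hQval : Q.eval (z j) = ∏ i ∈ Finset.univ.erase j, (z j - z i) := by
    simp [hQdef, eval_prod]
  have hQne : Q.eval (z j) ≠ 0 := by
    rw [hQval]
    refine Finset.prod_ne_zero_iff.mpr fun i hi => ?_
    have : z i ≠ z j := fun h => (Finset.mem_erase.mp hi).1 (hinj h)
    exact sub_ne_zero.mpr (Ne.symm this)
  -- first and second derivative evaluations of P at z j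
  have hP' : (derivative P).eval (z j) = Q.eval (z j) := by
    rw [hfact, derivative_mul]
    simp
  have hP'' : (derivative (derivative P)).eval (z j) = 2 * (derivative Q).eval (z j) := by
    rw [hfact]
    simp only [derivative_mul, derivative_sub, derivative_X, derivative_C, derivative_add,
      sub_zero, one_mul, eval_add, eval_mul, eval_sub, eval_X, eval_C, sub_self, zero_mul,
      mul_zero, add_zero, zero_add]
    ring
  have hP0 : P.eval (z j) = 0 := by rw [hfact]; simp
  -- the ODE at z j
  have hode := besselP_ode n (z j)
  rw [← hPdef, hP', hP'', hP0] at hode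
  have hkey : z j * (derivative Q).eval (z j) = (z j + n) * Q.eval (z j) := by
    have h2 : (2 : ℂ) ≠ 0 := two_ne_zero
    have : 2 * (z j * (derivative Q).eval (z j)) = 2 * ((z j + n) * Q.eval (z j)) := by
      linear_combination hode
    exact mul_left_cancel₀ h2 this
  -- sum expression for (derivative Q).eval (z j)
  have hQ' : (derivative Q).eval (z j)
      = ∑ k ∈ Finset.univ.erase j, ∏ l ∈ (Finset.univ.erase j).erase k, (z j - z l) := by
    rw [hQdef, derivative_finset_prod']
    rw [eval_finset_sum]
    refine Finset.sum_congr rfl fun k _ => ?_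
    simp [eval_prod]
  have hsum : (∑ k ∈ Finset.univ.erase j, 1 / (z j - z k)) * Q.eval (z j)
      = (derivative Q).eval (z j) := by
    rw [hQ', Finset.sum_mul]
    refine Finset.sum_congr rfl fun k hk => ?_
    have hkj : z j ≠ z k := by
      have : k ≠ j := (Finset.mem_erase.mp hk).1
      exact fun h => this (hinj h.symm)
    have hne : z j - z k ≠ 0 := sub_ne_zero.mpr hkj
    rw [hQval, ← Finset.mul_prod_erase _ _ hk]
    field_simp
  have hS : (∑ k ∈ Finset.univ.erase j, 1 / (z j - z k)) = (z j + n) / z j := by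
    have hzj := hz0 j
    have := hkey
    rw [← hsum] at this
    have h1 : z j * (∑ k ∈ Finset.univ.erase j, 1 / (z j - z k)) = z j + n := by
      have := mul_right_cancel₀ hQne (by linear_combination this :
        z j * (∑ k ∈ Finset.univ.erase j, 1 / (z j - z k)) * Q.eval (z j)
          = (z j + n) * Q.eval (z j))
      exact this
    field_simp [hzj] at h1 ⊢
    linear_combination h1
  have hneg : ∑ k ∈ Finset.univ.erase j, 1 / (z k - z j)
      = -∑ k ∈ Finset.univ.erase j, 1 / (z j - z k) := by
    rw [← Finset.sum_neg_distrib]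
    refine Finset.sum_congr rfl fun k hk => ?_
    rw [show z k - z j = -(z j - z k) by ring, div_neg]
  rw [hneg, hS, hν]
  have hzj := hz0 j
  field_simp
  ring
end

section
/- Let n ≥ 1 be an integer, set ν = n + 1/2, and let H_n(z) = ∑_{k=0}^n Γ(2n − k + 1) · z^k / (Γ(n − k + 1) · Γ(k + 1) · 2^{n−k}) be the monic complex polynomial of degree n. Let z_1, …, z_n be the roots of H_n, assumed pairwise distinct and all nonzero, and assume in addition that z_k + z_j ≠ 0 for all j, k. Then for every j ∈ {1, …, n}: ∑_{k=1, k≠j}^n 1/(z_k² − z_j²) = (1 − z_j − ν)/(2 z_j²) − (1/(2 z_j)) · ∑_{k=1}^n 1/(z_k + z_j). -/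
open Finset

open Polynomial

noncomputable def mcP (n : ℕ) : ℂ[X] :=
  ∑ k ∈ Finset.range (n + 1),
    Polynomial.monomial k
      (((2 * n - k).factorial : ℂ) / (((n - k).factorial : ℂ) * (k.factorial : ℂ) * 2 ^ (n - k)))

lemma mcP_eval (n : ℕ) (w : ℂ) : (mcP n).eval w = macdonaldPoly n w := by
  rw [mcP, macdonaldPoly, eval_finset_sum]
  refine Finset.sum_congr rfl fun k hk => ?_
  rw [Finset.mem_range] at hk
  have hk' : k ≤ n := by omega
  have h1 : 2 * (n : ℂ) - (k : ℂ) + 1 = ((2 * n - k : ℕ) : ℂ) + 1 := by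
    push_cast [Nat.cast_sub (by omega : k ≤ 2 * n)]; ring
  have h2 : (n : ℂ) - (k : ℂ) + 1 = ((n - k : ℕ) : ℂ) + 1 := by
    push_cast [Nat.cast_sub hk']; ring
  rw [eval_monomial, h1, h2, Complex.Gamma_nat_eq_factorial, Complex.Gamma_nat_eq_factorial,
    Complex.Gamma_nat_eq_factorial]
  ring

lemma mcP_coeff (n m : ℕ) : (mcP n).coeff m =
    if m ≤ n then ((2 * n - m).factorial : ℂ) / (((n - m).factorial : ℂ) * (m.factorial : ℂ) * 2 ^ (n - m)) else 0 := by
  rw [mcP, finset_sum_coeff]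
  simp only [coeff_monomial]
  rw [Finset.sum_ite_eq' (Finset.range (n + 1)) m]
  simp [Nat.lt_succ_iff]

lemma mcP_rec (n m : ℕ) :
    ((m : ℂ) + 1) * ((m : ℂ) - 2 * n) * (mcP n).coeff (m + 1)
      = 2 * ((m : ℂ) - n) * (mcP n).coeff m := by
  rw [mcP_coeff, mcP_coeff]
  rcases lt_trichotomy m n with h | rfl | h
  · obtain ⟨d, rfl⟩ : ∃ d, n = m + d + 1 := ⟨n - m - 1, by omega⟩
    rw [if_pos (by omega), if_pos (by omega)]
    have e1 : 2 * (m + d + 1) - (m + 1) = m + 2 * d + 1 := by omega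
    have e2 : m + d + 1 - (m + 1) = d := by omega
    have e3 : 2 * (m + d + 1) - m = (m + 2 * d + 1) + 1 := by omega
    have e4 : m + d + 1 - m = d + 1 := by omega
    rw [e1, e2, e3, e4, Nat.factorial_succ (m + 2 * d + 1), Nat.factorial_succ d,
      Nat.factorial_succ m, pow_succ]
    have f1 : ((m + 2 * d + 1).factorial : ℂ) ≠ 0 := Nat.cast_ne_zero.2 (Nat.factorial_ne_zero _)
    have f2 : (d.factorial : ℂ) ≠ 0 := Nat.cast_ne_zero.2 (Nat.factorial_ne_zero _)
    have f3 : (m.factorial : ℂ) ≠ 0 := Nat.cast_ne_zero.2 (Nat.factorial_ne_zero _)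
    have f4 : (2 : ℂ) ^ d ≠ 0 := pow_ne_zero _ two_ne_zero
    have f5 : ((m : ℂ) + 1) ≠ 0 := by
      have := Nat.cast_add_one_ne_zero (R := ℂ) m; exact this
    have f6 : ((d : ℂ) + 1) ≠ 0 := Nat.cast_add_one_ne_zero d
    push_cast
    field_simp
    ring
  · rw [if_neg (by omega), if_pos le_rfl]
    simp
  · rw [if_neg (by omega), if_neg (by omega)]
    ring

lemma mcP_ode (n : ℕ) :
    X * derivative (derivative (mcP n)) + C (2 * (n : ℂ)) * mcP n
      = C 2 * (X * derivative (mcP n)) + C (2 * (n : ℂ)) * derivative (mcP n) := by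
  ext m
  rcases m with _ | m
  · simp only [coeff_add, coeff_C_mul, mul_coeff_zero, coeff_X_zero, zero_mul, coeff_C_zero,
      coeff_derivative]
    have h := mcP_rec n 0
    push_cast at h ⊢
    linear_combination h
  · simp only [coeff_add, coeff_C_mul, coeff_X_mul, coeff_derivative]
    have h := mcP_rec n (m + 1)
    push_cast at h ⊢
    linear_combination h

lemma finset_derivative_prod {ι : Type*} [DecidableEq ι] (t : Finset ι) (f : ι → ℂ[X]) :
    derivative (∏ i ∈ t, f i) = ∑ i ∈ t, (∏ k ∈ t.erase i, f k) * derivative (f i) :=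
  derivative_prod

lemma final_alg (v t S w : ℂ) (h3 : v ≠ 0) (key : v * t = v + w) :
    1 / (2 * v) * (-t - (S - 1 / (2 * v))) = (1 - v - (w + 1 / 2)) / (2 * v ^ 2) - 1 / (2 * v) * S := by
  have h4 : (4:ℂ) * v ^ 2 ≠ 0 := by simp [h3]
  have h5 : (2:ℂ) * v ^ 2 ≠ 0 := by simp [h3]
  have h6 : (2:ℂ) * v ≠ 0 := by simp [h3]
  have lhs_eq : 1 / (2 * v) * (-t - (S - 1 / (2 * v))) = (2 * v * (-t - S) + 1) / (4 * v ^ 2) := by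
    rw [eq_div_iff h4]; field_simp; ring
  rw [show 1 / (2 * v) * S = S / (2 * v) from by ring, div_sub_div _ _ h5 h6, lhs_eq,
    div_eq_div_iff h4 (mul_ne_zero h5 h6)]
  linear_combination (-8 * v ^ 3) * key

theorem macdonald_zeros_square_sum_identity (n : ℕ) (hn : 1 ≤ n) (ν : ℂ)
    (hν : ν = (n : ℂ) + 1 / 2) (z : Fin n → ℂ) (hinj : Function.Injective z)
    (hz0 : ∀ k, z k ≠ 0) (hsum : ∀ j k, z k + z j ≠ 0)
    (hroots : ∀ w : ℂ, macdonaldPoly n w = ∏ j, (w - z j)) (j : Fin n) :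
    ∑ k ∈ Finset.univ.erase j, 1 / ((z k) ^ 2 - (z j) ^ 2)
      = (1 - z j - ν) / (2 * (z j) ^ 2)
        - (1 / (2 * z j)) * ∑ k, 1 / (z k + z j) := by
  classical
  set s : Finset (Fin n) := Finset.univ.erase j with hs
  set Q : ℂ[X] := ∏ i, (X - C (z i)) with hQdef
  set R : ℂ[X] := ∏ k ∈ s, (X - C (z k)) with hRdef
  have hPQ : mcP n = Q := Polynomial.funext fun w => by
    rw [mcP_eval, hroots, hQdef, eval_prod]
    simp
  have hQR : Q = (X - C (z j)) * R :=
    (Finset.mul_prod_erase Finset.univ (fun i => X - C (z i)) (Finset.mem_univ j)).symm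
  have hQ' : derivative Q = R + (X - C (z j)) * derivative R := by
    rw [hQR, derivative_mul]
    simp
  have hQ'' : derivative (derivative Q)
      = derivative R + (derivative R + (X - C (z j)) * derivative (derivative R)) := by
    rw [hQ', derivative_add, derivative_mul]
    simp
  have hQj : Q.eval (z j) = 0 := by rw [hQR]; simp
  have hQ'j : (derivative Q).eval (z j) = R.eval (z j) := by rw [hQ']; simp
  have hQ''j : (derivative (derivative Q)).eval (z j)
      = 2 * (derivative R).eval (z j) := by
    rw [hQ'']; simp; ring
  have hode := congrArg (Polynomial.eval (z j)) (mcP_ode n)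
  rw [hPQ] at hode
  simp only [eval_add, eval_mul, eval_C, eval_X, hQj, hQ'j, hQ''j, mul_zero, add_zero] at hode
  -- hode : z j * (2 * R'.eval) = 2 * (z j * R.eval) + 2n * R.eval
  set Rv : ℂ := R.eval (z j) with hRv
  have hne : ∀ k ∈ s, z j - z k ≠ 0 := by
    intro k hk
    have : k ≠ j := (Finset.mem_erase.1 hk).1
    exact sub_ne_zero.2 fun h => this (hinj h.symm)
  have hRvval : Rv = ∏ k ∈ s, (z j - z k) := by rw [hRv, hRdef, eval_prod]; simp
  have hRv0 : Rv ≠ 0 := by rw [hRvval]; exact Finset.prod_ne_zero_iff.2 hne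
  set T : ℂ := ∑ l ∈ s, 1 / (z j - z l) with hT
  have hR'j : (derivative R).eval (z j) = Rv * T := by
    rw [hRdef, finset_derivative_prod, eval_finset_sum]
    rw [hT, Finset.mul_sum]
    refine Finset.sum_congr rfl fun l hl => ?_
    rw [eval_mul, eval_prod]
    simp only [derivative_sub, derivative_X, derivative_C, sub_zero, eval_one, mul_one,
      eval_sub, eval_X, eval_C]
    rw [hRvval, ← Finset.mul_prod_erase s _ hl]
    rw [one_div, mul_comm (z j - z l)]
    exact (mul_inv_cancel_right₀ (hne l hl) _).symm
  rw [hR'j] at hode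
  have key : z j * T = z j + (n : ℂ) := by
    have h2 : Rv * (2 * (z j * T)) = Rv * (2 * z j + 2 * n) := by linear_combination hode
    have h3 := mul_left_cancel₀ hRv0 h2
    linear_combination h3 / 2
  set S : ℂ := ∑ k, 1 / (z k + z j) with hS
  have hterm : ∀ k ∈ s, (1 : ℂ) / (z k ^ 2 - z j ^ 2)
      = 1 / (2 * z j) * (-(1 / (z j - z k)) - 1 / (z k + z j)) := by
    intro k hk
    have h1 := hne k hk
    have h2 := hsum j k
    have h3 := hz0 j
    have hfac : z k ^ 2 - z j ^ 2 = -((z j - z k) * (z k + z j)) := by ring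
    rw [hfac]
    field_simp
    ring
  rw [Finset.sum_congr rfl hterm, ← Finset.mul_sum]
  have e2 : ∑ k ∈ s, (-(1 / (z j - z k)) - 1 / (z k + z j))
      = -T - (S - 1 / (z j + z j)) := by
    rw [Finset.sum_sub_distrib]
    congr 1
    · rw [Finset.sum_neg_distrib, hT]
    · rw [hs, Finset.sum_erase_eq_sub (Finset.mem_univ j), hS]
  rw [e2, hν]
  have h3 := hz0 j
  have h4 : z j + z j ≠ 0 := hsum j j
  rw [show z j + z j = 2 * z j from by ring]
  exact final_alg (z j) T S n h3 key
end

section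
/- Let n ≥ 1 be an integer, set ν = n + 1/2, and let H_n(z) = ∑_{k=0}^n Γ(2n − k + 1) · z^k / (Γ(n − k + 1) · Γ(k + 1) · 2^{n−k}) be the monic complex polynomial of degree n. Let z_1, …, z_n be the roots of H_n, assumed pairwise distinct and all nonzero, and assume in addition that z_k + z_j ≠ 0 and z_k² + z_j² ≠ 0 for all j, k. Then for every j ∈ {1, …, n}: ∑_{k=1, k≠j}^n 1/(z_k⁴ − z_j⁴) = (2 − ν − z_j)/(4 z_j⁴) − (1/(4 z_j³)) · ∑_{k=1}^n ( 1/(z_j + z_k) + 2 z_j/(z_j² + z_k²) ). -/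
/-!
`H_n` is the reverse Bessel polynomial: its coefficients obey a two-term recurrence, which says
exactly that `w H'' = 2 (w + n) H' - 2 n H`. If `H = ∏ (w - z_k)` has simple roots, then at
`s = z_j` one has `H''(s) = 2 H'(s) ∑_{k ≠ j} 1 / (s - z_k)` with `H'(s) ≠ 0`, so the differential
equation gives `s ∑_{k ≠ j} 1 / (s - z_k) = s + n`. The quartic sum then follows from the partial
fraction decomposition of `1 / (z⁴ - s⁴)` along `z⁴ - s⁴ = -(s - z)(s + z)(s² + z²)`; the terms
`k = j` of the right-hand side only contribute constants.
-/

open Finset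

open Polynomial Nat

namespace Polynomial

section CommRing

variable {R : Type*} [CommRing R]

theorem X_mul_derivative_derivative_of_coeff_succ {p : R[X]} {a : R}
    (h : ∀ k : ℕ, ((k : R) + 1) * (k - 2 * a) * p.coeff (k + 1) + 2 * (a - k) * p.coeff k = 0) :
    X * derivative (derivative p) = 2 * (X + C a) * derivative p - 2 * C a * p := by
  ext (_ | k)
  · simp only [mul_coeff_zero, coeff_X_zero, coeff_derivative, zero_add, cast_one, cast_zero,
      mul_one, zero_mul, mul_assoc, coeff_sub, coeff_ofNat_mul, coeff_add, coeff_C_zero]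
    linear_combination h 0
  · have hk := h (k + 1)
    push_cast at hk
    simp only [coeff_X_mul, coeff_derivative, cast_add, cast_one, mul_assoc, add_mul, one_mul,
      coeff_sub, coeff_ofNat_mul, coeff_add, coeff_C_mul]
    linear_combination hk

theorem eval_derivative_X_sub_C_mul (s : R) (q : R[X]) :
    eval s (derivative ((X - C s) * q)) = eval s q := by
  simp [derivative_mul]

theorem eval_derivative_derivative_X_sub_C_mul (s : R) (q : R[X]) :
    eval s (derivative (derivative ((X - C s) * q))) = 2 * eval s (derivative q) := by
  simp only [derivative_mul, derivative_sub, derivative_X, derivative_C, sub_zero, one_mul,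
    derivative_add, eval_add, eval_mul, eval_sub, eval_X, eval_C, sub_self, zero_mul, add_zero]
  ring

end CommRing

variable {K ι : Type*} [Field K] [DecidableEq ι]

theorem eval_derivative_prod_X_sub_C (t : Finset ι) (z : ι → K) {s : K}
    (hs : ∀ k ∈ t, s ≠ z k) :
    eval s (derivative (∏ k ∈ t, (X - C (z k))))
      = eval s (∏ k ∈ t, (X - C (z k))) * ∑ k ∈ t, 1 / (s - z k) := by
  simp only [derivative_prod_finset, derivative_X_sub_C, mul_one, eval_finsetSum, eval_prod,
    eval_sub, eval_X, eval_C, mul_sum]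
  refine sum_congr rfl fun k hk => ?_
  rw [← mul_prod_erase t _ hk, mul_one_div, mul_div_cancel_left₀ _ (sub_ne_zero.2 (hs k hk))]

variable [Fintype ι] {z : ι → K}

theorem eval_derivative_prod_X_sub_C_ne_zero (hz : Function.Injective z) (j : ι) :
    eval (z j) (derivative (∏ k, (X - C (z k)))) ≠ 0 := by
  rw [← mul_prod_erase univ _ (mem_univ j), eval_derivative_X_sub_C_mul]
  simp only [eval_prod, eval_sub, eval_X, eval_C]
  exact prod_ne_zero_iff.2 fun k hk => sub_ne_zero.2 (hz.ne (ne_of_mem_erase hk).symm)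

theorem eval_derivative_derivative_prod_X_sub_C (hz : Function.Injective z) (j : ι) :
    eval (z j) (derivative (derivative (∏ k, (X - C (z k)))))
      = 2 * eval (z j) (derivative (∏ k, (X - C (z k))))
          * ∑ k ∈ univ.erase j, 1 / (z j - z k) := by
  rw [← mul_prod_erase univ _ (mem_univ j), eval_derivative_derivative_X_sub_C_mul,
    eval_derivative_X_sub_C_mul,
    eval_derivative_prod_X_sub_C _ _ fun k hk => hz.ne (ne_of_mem_erase hk).symm, mul_assoc]

end Polynomial

theorem one_div_pow_four_sub_pow_four {K : Type*} [Field K] [CharZero K] {s z : K} (hs : s ≠ 0)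
    (hsz : s - z ≠ 0) (hzs : z + s ≠ 0) (hzs2 : z ^ 2 + s ^ 2 ≠ 0) :
    1 / (z ^ 4 - s ^ 4)
      = -(1 / (4 * s ^ 3)) * (1 / (s - z) + (1 / (s + z) + 2 * s / (s ^ 2 + z ^ 2))) := by
  have h4 : z ^ 4 - s ^ 4 ≠ 0 := by
    rw [show z ^ 4 - s ^ 4 = -((s - z) * (z + s) * (z ^ 2 + s ^ 2)) by ring]
    exact neg_ne_zero.2 (mul_ne_zero (mul_ne_zero hsz hzs) hzs2)
  rw [add_comm s z, add_comm (s ^ 2)]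
  field_simp
  ring

theorem Complex.Gamma_natCast_sub_add_one {m k : ℕ} (h : k ≤ m) :
    Complex.Gamma ((m : ℂ) - k + 1) = (m - k)! := by
  rw [← Nat.cast_sub h, Complex.Gamma_nat_eq_factorial]

/-- `macdonaldPoly n` as a polynomial, with `Γ(m + 1)` written as `m!`. -/
noncomputable def macdonaldPolynomial (n : ℕ) : ℂ[X] :=
  ∑ k ∈ range (n + 1), C (((2 * n - k)! : ℂ) / ((n - k)! * k ! * 2 ^ (n - k))) * X ^ k

theorem eval_macdonaldPolynomial (n : ℕ) (w : ℂ) :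
    (macdonaldPolynomial n).eval w = macdonaldPoly n w := by
  simp only [macdonaldPolynomial, macdonaldPoly, eval_finsetSum, eval_mul, eval_C, eval_X_pow]
  refine sum_congr rfl fun k hk => ?_
  have hk : k ≤ n := Nat.lt_succ_iff.1 (mem_range.1 hk)
  rw [show 2 * (n : ℂ) = (2 * n : ℕ) by push_cast; ring,
    Complex.Gamma_natCast_sub_add_one (by omega), Complex.Gamma_natCast_sub_add_one hk,
    Complex.Gamma_nat_eq_factorial, mul_div_right_comm]

theorem coeff_macdonaldPolynomial (n k : ℕ) :
    (macdonaldPolynomial n).coeff k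
      = if k ≤ n then ((2 * n - k)! : ℂ) / ((n - k)! * k ! * 2 ^ (n - k)) else 0 := by
  simp [macdonaldPolynomial, finsetSum_coeff]

theorem macdonaldPolynomial_coeff_succ (n k : ℕ) :
    ((k : ℂ) + 1) * (k - 2 * n) * (macdonaldPolynomial n).coeff (k + 1)
      + 2 * (n - k) * (macdonaldPolynomial n).coeff k = 0 := by
  rcases lt_trichotomy k n with hk | rfl | hk
  · obtain ⟨m, rfl⟩ := Nat.exists_eq_add_of_lt hk
    rw [coeff_macdonaldPolynomial, coeff_macdonaldPolynomial, if_pos (by omega), if_pos (by omega),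
      show 2 * (k + m + 1) - (k + 1) = k + 2 * m + 1 by omega,
      show 2 * (k + m + 1) - k = k + 2 * m + 1 + 1 by omega,
      show k + m + 1 - (k + 1) = m by omega, show k + m + 1 - k = m + 1 by omega]
    simp only [Nat.factorial_succ, pow_succ]
    push_cast
    field_simp
    ring
  · simp [coeff_macdonaldPolynomial]
  · simp [coeff_macdonaldPolynomial, hk.not_ge, (hk.trans (Nat.lt_succ_self k)).not_ge]

theorem macdonaldPolynomial_ode (n : ℕ) :
    X * derivative (derivative (macdonaldPolynomial n))
      = 2 * (X + C (n : ℂ)) * derivative (macdonaldPolynomial n)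
          - 2 * C (n : ℂ) * macdonaldPolynomial n :=
  X_mul_derivative_derivative_of_coeff_succ (macdonaldPolynomial_coeff_succ n)

theorem mul_sum_one_div_sub_of_macdonaldPoly_eq_prod {n : ℕ} {z : Fin n → ℂ}
    (hz : Function.Injective z) (hroots : ∀ w : ℂ, macdonaldPoly n w = ∏ j, (w - z j))
    (j : Fin n) :
    z j * ∑ k ∈ univ.erase j, 1 / (z j - z k) = z j + n := by
  have hP : macdonaldPolynomial n = ∏ k, (X - C (z k)) :=
    Polynomial.funext fun w => by simp [eval_macdonaldPolynomial, hroots, eval_prod]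
  have hode := congrArg (eval (z j)) (macdonaldPolynomial_ode n)
  simp only [hP, eval_mul, eval_sub, eval_add, eval_X, eval_C, eval_ofNat,
    eval_derivative_derivative_prod_X_sub_C hz, eval_prod, sub_self,
    prod_eq_zero (mem_univ j), mul_zero, sub_zero] at hode
  exact mul_left_cancel₀ (mul_ne_zero two_ne_zero (eval_derivative_prod_X_sub_C_ne_zero hz j))
    (by linear_combination hode)

theorem macdonald_zeros_quartic_sum_identity_general (n : ℕ) (ν : ℂ)
    (hν : ν = (n : ℂ) + 1 / 2) (z : Fin n → ℂ) (hinj : Function.Injective z)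
    (hz0 : ∀ k, z k ≠ 0) (hsum : ∀ j k, z k + z j ≠ 0)
    (hsumsq : ∀ j k, (z k) ^ 2 + (z j) ^ 2 ≠ 0)
    (hroots : ∀ w : ℂ, macdonaldPoly n w = ∏ j, (w - z j)) (j : Fin n) :
    ∑ k ∈ Finset.univ.erase j, 1 / ((z k) ^ 4 - (z j) ^ 4)
      = (2 - ν - z j) / (4 * (z j) ^ 4)
        - (1 / (4 * (z j) ^ 3)) *
            ∑ k, (1 / (z j + z k) + 2 * z j / ((z j) ^ 2 + (z k) ^ 2)) := by
  have hs := hz0 j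
  have hS : ∑ k ∈ univ.erase j, 1 / (z j - z k) = (z j + n) / z j :=
    eq_div_of_mul_eq hs
      (by rw [mul_comm, mul_sum_one_div_sub_of_macdonaldPoly_eq_prod hinj hroots])
  rw [sum_congr rfl fun k hk => one_div_pow_four_sub_pow_four hs
      (sub_ne_zero.2 (hinj.ne (ne_of_mem_erase hk).symm)) (hsum j k) (hsumsq j k),
    ← mul_sum, sum_add_distrib, ← add_sum_erase univ _ (mem_univ j), hS, hν]
  field_simp
  ring

theorem macdonald_zeros_quartic_sum_identity (n : ℕ) (hn : 1 ≤ n) (ν : ℂ)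
    (hν : ν = (n : ℂ) + 1 / 2) (z : Fin n → ℂ) (hinj : Function.Injective z)
    (hz0 : ∀ k, z k ≠ 0) (hsum : ∀ j k, z k + z j ≠ 0)
    (hsumsq : ∀ j k, (z k) ^ 2 + (z j) ^ 2 ≠ 0)
    (hroots : ∀ w : ℂ, macdonaldPoly n w = ∏ j, (w - z j)) (j : Fin n) :
    ∑ k ∈ Finset.univ.erase j, 1 / ((z k) ^ 4 - (z j) ^ 4)
      = (2 - ν - z j) / (4 * (z j) ^ 4)
        - (1 / (4 * (z j) ^ 3)) *
            ∑ k, (1 / (z j + z k) + 2 * z j / ((z j) ^ 2 + (z k) ^ 2)) :=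
  macdonald_zeros_quartic_sum_identity_general n ν hν z hinj hz0 hsum hsumsq hroots j
end
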